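/- arXiv:2206.11727 — 2 statements merged into one kernel-verified Lean document; each statement's English description precedes it below -/
import Mathlib

section
/- The function f(k) = -ln(1-√k)/k on (0,1) attains its minimum value c* ≈ 2.4554 at a unique point k* ≈ 0.5117; precisely, there exists a unique k* in (0,1) minimizing f, and f(k*) < 2.46 while f(k*) > 2.45. -/
/-!
In the variable `s = √k` the function is `g s = -log (1 - s) / s ^ 2`, and
`g' s = φ s / s ^ 3` with `φ s = s / (1 - s) + 2 log (1 - s)`. Since `φ 0 = 0` and
`φ' s = (2 s - 1) / (1 - s) ^ 2`, `φ` is negative on `(0, s*)` and positive on `(s*, 1)`,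
where `s*` is its unique zero in `(1/2, 1)`; hence `k* = s*²` is the unique minimiser.
At `s*` we have `log (1 - s*) = -s* / (2 (1 - s*))`, so the minimum equals
`1 / (2 s* (1 - s*))`, and locating `s* ∈ (0.715, 0.716)` through the series of
`log 1.14`, `log 1.136` and bounds on `log 2` pins it in `(2.45, 2.46)`.
-/

open Real Set

lemma lt_of_hasDerivAt_neg_of_pos {g g' : ℝ → ℝ} {a b c x : ℝ} (hc : c ∈ Ioo a b)
    (hg : ∀ y ∈ Ioo a b, HasDerivAt g (g' y) y) (hneg : ∀ y ∈ Ioo a c, g' y < 0)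
    (hpos : ∀ y ∈ Ioo c b, 0 < g' y) (hx : x ∈ Ioo a b) (hxc : x ≠ c) : g c < g x := by
  have hcont : ContinuousOn g (Ioo a b) := fun y hy => (hg y hy).continuousAt.continuousWithinAt
  rcases hxc.lt_or_gt with hlt | hgt
  · have hanti : StrictAntiOn g (Ioc a c) :=
      strictAntiOn_of_hasDerivWithinAt_neg (convex_Ioc a c)
        (hcont.mono (Ioc_subset_Ioo_right hc.2))
        (fun y hy => by
          rw [interior_Ioc] at hy; exact (hg y ⟨hy.1, hy.2.trans hc.2⟩).hasDerivWithinAt)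
        (fun y hy => by rw [interior_Ioc] at hy; exact hneg y hy)
    exact hanti ⟨hx.1, hlt.le⟩ ⟨hc.1, le_rfl⟩ hlt
  · have hmono : StrictMonoOn g (Ico c b) :=
      strictMonoOn_of_hasDerivWithinAt_pos (convex_Ico c b)
        (hcont.mono (Ico_subset_Ioo_left hc.1))
        (fun y hy => by
          rw [interior_Ico] at hy; exact (hg y ⟨hc.1.trans hy.1, hy.2⟩).hasDerivWithinAt)
        (fun y hy => by rw [interior_Ico] at hy; exact hpos y hy)
    exact hmono ⟨le_rfl, hc.2⟩ ⟨hgt.le, hx.2⟩ hgt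

noncomputable def ewmaProfile (s : ℝ) : ℝ := -log (1 - s) / s ^ 2

noncomputable def ewmaProfileDerivNum (x : ℝ) : ℝ := x / (1 - x) + 2 * log (1 - x)

lemma hasDerivAt_ewmaProfileDerivNum {x : ℝ} (hx : x < 1) :
    HasDerivAt ewmaProfileDerivNum ((2 * x - 1) / (1 - x) ^ 2) x := by
  have h1x : 1 - x ≠ 0 := by linarith
  have hsub := (hasDerivAt_id' x).const_sub 1
  refine (((hasDerivAt_id' x).div hsub h1x).add ((hsub.log h1x).const_mul 2)).congr_deriv ?_
  field_simp
  ring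

lemma hasDerivAt_ewmaProfile {s : ℝ} (hs0 : s ≠ 0) (hs1 : s < 1) :
    HasDerivAt ewmaProfile (ewmaProfileDerivNum s / s ^ 3) s := by
  have h1s : 1 - s ≠ 0 := by linarith
  have hnum : HasDerivAt (fun y => -log (1 - y)) (-(-1 / (1 - s))) s :=
    (((hasDerivAt_id' s).const_sub 1).log h1s).neg
  refine (hnum.div (hasDerivAt_pow 2 s) (pow_ne_zero 2 hs0)).congr_deriv ?_
  simp only [ewmaProfileDerivNum]
  field_simp
  ring

lemma continuousOn_ewmaProfileDerivNum {s : Set ℝ} (hs : ∀ x ∈ s, x < 1) :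
    ContinuousOn ewmaProfileDerivNum s := fun x hx =>
  (hasDerivAt_ewmaProfileDerivNum (hs x hx)).continuousAt.continuousWithinAt

lemma ewmaProfileDerivNum_strictAntiOn : StrictAntiOn ewmaProfileDerivNum (Icc 0 (1 / 2)) := by
  refine strictAntiOn_of_hasDerivWithinAt_neg (f' := fun x => (2 * x - 1) / (1 - x) ^ 2)
    (convex_Icc _ _)
    (continuousOn_ewmaProfileDerivNum fun x hx => by linarith [hx.2])
    (fun x hx => ?_) (fun x hx => ?_) <;> rw [interior_Icc] at hx
  · exact (hasDerivAt_ewmaProfileDerivNum (by linarith [hx.2])).hasDerivWithinAt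
  · have h1x : 0 < 1 - x := by linarith [hx.2]
    exact div_neg_of_neg_of_pos (by linarith [hx.2]) (by positivity)

lemma ewmaProfileDerivNum_strictMonoOn : StrictMonoOn ewmaProfileDerivNum (Ico (1 / 2) 1) := by
  refine strictMonoOn_of_hasDerivWithinAt_pos (f' := fun x => (2 * x - 1) / (1 - x) ^ 2)
    (convex_Ico _ _)
    (continuousOn_ewmaProfileDerivNum fun x hx => hx.2)
    (fun x hx => ?_) (fun x hx => ?_) <;> rw [interior_Ico] at hx
  · exact (hasDerivAt_ewmaProfileDerivNum hx.2).hasDerivWithinAt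
  · have h1x : 0 < 1 - x := by linarith [hx.2]
    exact div_pos (by linarith [hx.1]) (by positivity)

lemma ewmaProfileDerivNum_neg {x y : ℝ} (hx : ewmaProfileDerivNum x = 0) (hx_half : 1 / 2 ≤ x)
    (hx1 : x < 1) (hy0 : 0 < y) (hyx : y < x) : ewmaProfileDerivNum y < 0 := by
  rcases le_or_gt y (1 / 2) with hy | hy
  · have h0 : ewmaProfileDerivNum 0 = 0 := by simp [ewmaProfileDerivNum]
    rw [← h0]
    exact ewmaProfileDerivNum_strictAntiOn ⟨le_rfl, by norm_num⟩ ⟨hy0.le, hy⟩ hy0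
  · rw [← hx]
    exact ewmaProfileDerivNum_strictMonoOn ⟨hy.le, hyx.trans hx1⟩ ⟨hx_half, hx1⟩ hyx

lemma ewmaProfileDerivNum_pos {x y : ℝ} (hx : ewmaProfileDerivNum x = 0) (hx_half : 1 / 2 ≤ x)
    (hxy : x < y) (hy1 : y < 1) : 0 < ewmaProfileDerivNum y := by
  rw [← hx]
  exact ewmaProfileDerivNum_strictMonoOn ⟨hx_half, hxy.trans hy1⟩ ⟨hx_half.trans hxy.le, hy1⟩ hxy

lemma ewmaProfileDerivNum_0715_neg : ewmaProfileDerivNum 0.715 < 0 := by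
  have hseries := abs_log_sub_add_sum_range_le (x := -0.14) (by norm_num [abs_of_nonpos]) 4
  have hsplit : log 0.285 = log 1.14 - 2 * log 2 := by
    rw [show (0.285 : ℝ) = 1.14 / 2 ^ 2 by norm_num, log_div (by norm_num) (by norm_num), log_pow]
    norm_num
  norm_num [Finset.sum_range_succ, abs_le] at hseries
  norm_num [ewmaProfileDerivNum, hsplit]
  linarith [hseries.2, log_two_gt_d9]

lemma ewmaProfileDerivNum_0716_pos : 0 < ewmaProfileDerivNum 0.716 := by
  have hseries := abs_log_sub_add_sum_range_le (x := -0.136) (by norm_num [abs_of_nonpos]) 4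
  have hsplit : log 0.284 = log 1.136 - 2 * log 2 := by
    rw [show (0.284 : ℝ) = 1.136 / 2 ^ 2 by norm_num, log_div (by norm_num) (by norm_num), log_pow]
    norm_num
  norm_num [Finset.sum_range_succ, abs_le] at hseries
  norm_num [ewmaProfileDerivNum, hsplit]
  linarith [hseries.1, log_two_lt_d9]

lemma exists_ewmaProfileDerivNum_eq_zero :
    ∃ x ∈ Ioo (0.715 : ℝ) 0.716, ewmaProfileDerivNum x = 0 :=
  intermediate_value_Ioo (by norm_num)
    (continuousOn_ewmaProfileDerivNum fun x hx => by norm_num at hx; linarith [hx.2])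
    ⟨ewmaProfileDerivNum_0715_neg, ewmaProfileDerivNum_0716_pos⟩

lemma ewmaProfile_lt_of_ne {x s : ℝ} (hx_half : 1 / 2 ≤ x) (hx1 : x < 1)
    (hx0 : ewmaProfileDerivNum x = 0) (hs : s ∈ Ioo (0 : ℝ) 1) (hsx : s ≠ x) :
    ewmaProfile x < ewmaProfile s := by
  refine lt_of_hasDerivAt_neg_of_pos ⟨by linarith, by linarith⟩
    (fun y hy => hasDerivAt_ewmaProfile hy.1.ne' hy.2) (fun y hy => ?_) (fun y hy => ?_) hs hsx
  · have hy0 : 0 < y := hy.1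
    exact div_neg_of_neg_of_pos
      (ewmaProfileDerivNum_neg hx0 hx_half hx1 hy.1 hy.2) (by positivity)
  · have hy0 : 0 < y := by linarith [hy.1]
    exact div_pos
      (ewmaProfileDerivNum_pos hx0 hx_half hy.1 hy.2) (by positivity)

lemma ewmaProfile_eq_of_ewmaProfileDerivNum_eq_zero {x : ℝ} (hx0 : 0 < x) (hx1 : x < 1)
    (h : ewmaProfileDerivNum x = 0) : ewmaProfile x = 1 / (2 * x * (1 - x)) := by
  have h1x : 1 - x ≠ 0 := by linarith
  have hlog : log (1 - x) = -x / (2 * (1 - x)) := by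
    rw [ewmaProfileDerivNum] at h
    field_simp at h ⊢
    linarith
  rw [ewmaProfile, hlog]
  field_simp

lemma neg_log_one_sub_sqrt_div_eq {k : ℝ} (hk : 0 ≤ k) :
    -log (1 - √k) / k = ewmaProfile √k := by
  rw [ewmaProfile, sq_sqrt hk]

lemma sqrt_mem_Ioo_zero_one {k : ℝ} (hk : k ∈ Ioo (0 : ℝ) 1) : √k ∈ Ioo (0 : ℝ) 1 :=
  ⟨sqrt_pos.2 hk.1, (sqrt_lt' one_pos).2 (by rw [one_pow]; exact hk.2)⟩

/-- The function `f k = -ln(1-√k)/k` on `(0,1)` attains its minimum at a unique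
point `k*`, and the minimum value lies in `(2.45, 2.46)`. -/
theorem ewma_constant_min :
    ∃ kstar ∈ Set.Ioo (0:ℝ) 1,
      (∀ k ∈ Set.Ioo (0:ℝ) 1,
        -Real.log (1 - Real.sqrt kstar) / kstar ≤ -Real.log (1 - Real.sqrt k) / k) ∧
      (∀ k ∈ Set.Ioo (0:ℝ) 1,
        (∀ k' ∈ Set.Ioo (0:ℝ) 1,
          -Real.log (1 - Real.sqrt k) / k ≤ -Real.log (1 - Real.sqrt k') / k') → k = kstar) ∧
      2.45 < -Real.log (1 - Real.sqrt kstar) / kstar ∧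
      -Real.log (1 - Real.sqrt kstar) / kstar < 2.46 := by
  obtain ⟨x, ⟨hx_lo, hx_hi⟩, hx0⟩ := exists_ewmaProfileDerivNum_eq_zero
  norm_num at hx_lo hx_hi
  have hkstar : x ^ 2 ∈ Ioo (0 : ℝ) 1 := ⟨by positivity, by nlinarith⟩
  have hf : ∀ k ∈ Ioo (0 : ℝ) 1, -log (1 - √k) / k = ewmaProfile √k :=
    fun k hk => neg_log_one_sub_sqrt_div_eq hk.1.le
  have hf_kstar : -log (1 - √(x ^ 2)) / x ^ 2 = ewmaProfile x := by
    rw [hf _ hkstar, sqrt_sq (by linarith)]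
  have hmin : ∀ k ∈ Ioo (0 : ℝ) 1, √k ≠ x → ewmaProfile x < ewmaProfile √k :=
    fun k hk hkx =>
      ewmaProfile_lt_of_ne (by linarith) (by linarith) hx0 (sqrt_mem_Ioo_zero_one hk) hkx
  have hval := ewmaProfile_eq_of_ewmaProfileDerivNum_eq_zero (by linarith) (by linarith) hx0
  refine ⟨x ^ 2, hkstar, fun k hk => ?_, fun k hk hk_min => ?_, ?_, ?_⟩
  · rw [hf k hk, hf_kstar]
    rcases eq_or_ne √k x with hkx | hkx
    · rw [hkx]
    · exact (hmin k hk hkx).le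
  · have hkx : √k = x := by
      by_contra hkx
      have := hk_min _ hkstar
      rw [hf k hk, hf_kstar] at this
      exact this.not_gt (hmin k hk hkx)
    rw [← hkx, sq_sqrt hk.1.le]
  · rw [hf_kstar, hval, lt_div_iff₀ (by nlinarith)]; nlinarith
  · rw [hf_kstar, hval, div_lt_iff₀ (by nlinarith)]; nlinarith
end

section
/- Asymptotic equivalence of the ARL₀ integral: as B → ∞, ∫_0^B x^{-N/2} e^x (∫_0^x z^{N/2-1} e^{-z} dz) dx ~ Γ(N/2) · B^{-N/2} e^B, i.e., the ratio of the two sides tends to 1. -/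
/-!
Numerator and denominator both tend to `+∞`, and the ratio of their derivatives is
`γ(a, B) / (Γ(a) (1 - a / B)) → 1` with `a = N / 2`, so the claim is L'Hôpital's rule for
`∞/∞` forms, which is proved by integrating the derivative inequalities `f' ≤ c g'`.
The bound `γ(a, x) ≤ x ^ a / a` keeps the integrand bounded near `0`.
-/

open Filter Topology Set MeasureTheory

theorem eventually_div_lt_of_deriv_le_mul {f g f' g' : ℝ → ℝ} {c u : ℝ} (hcu : c < u)
    (hf : ∀ᶠ x in atTop, HasDerivAt f (f' x) x) (hg : ∀ᶠ x in atTop, HasDerivAt g (g' x) x)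
    (hgtop : Tendsto g atTop atTop) (hle : ∀ᶠ x in atTop, f' x ≤ c * g' x) :
    ∀ᶠ x in atTop, f x / g x < u := by
  obtain ⟨x₀, hx₀⟩ := eventually_atTop.1 (hf.and (hg.and hle))
  have hderiv : ∀ x ≥ x₀, HasDerivAt (fun y => c * g y - f y) (c * g' x - f' x) x :=
    fun x hx => ((hx₀ x hx).2.1.const_mul c).sub (hx₀ x hx).1
  have hmono : MonotoneOn (fun y => c * g y - f y) (Ici x₀) := by
    refine monotoneOn_of_hasDerivWithinAt_nonneg (f' := fun x => c * g' x - f' x) (convex_Ici x₀)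
      (fun x hx => (hderiv x hx).continuousAt.continuousWithinAt) (fun x hx => ?_) fun x hx => ?_
    · rw [interior_Ici] at hx
      exact (hderiv x (le_of_lt hx)).hasDerivWithinAt
    · rw [interior_Ici] at hx
      exact sub_nonneg.2 (hx₀ x (le_of_lt hx)).2.2
  set K := c * g x₀ - f x₀
  have hlim : Tendsto (fun x => c - K / g x) atTop (𝓝 c) := by
    simpa using tendsto_const_nhds.sub (tendsto_const_nhds.div_atTop hgtop)
  filter_upwards [eventually_ge_atTop x₀, hgtop.eventually_gt_atTop 0,
    hlim.eventually (gt_mem_nhds hcu)] with x hx hgx hlt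
  have hK : K ≤ c * g x - f x := hmono self_mem_Ici hx hx
  calc f x / g x ≤ c - K / g x := by
        rw [le_sub_iff_add_le, ← add_div, div_le_iff₀ hgx]; linarith
    _ < u := hlt

theorem lhopital_top_atTop {f g f' g' : ℝ → ℝ} {l : ℝ}
    (hf : ∀ᶠ x in atTop, HasDerivAt f (f' x) x) (hg : ∀ᶠ x in atTop, HasDerivAt g (g' x) x)
    (hg' : ∀ᶠ x in atTop, 0 < g' x) (hgtop : Tendsto g atTop atTop)
    (hdiv : Tendsto (fun x => f' x / g' x) atTop (𝓝 l)) :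
    Tendsto (fun x => f x / g x) atTop (𝓝 l) := by
  refine tendsto_order.2 ⟨fun u hu => ?_, fun u hu => ?_⟩
  · obtain ⟨c, huc, hcl⟩ := exists_between hu
    have hneg := eventually_div_lt_of_deriv_le_mul (neg_lt_neg huc)
      (hf.mono fun x hx => hx.neg) hg hgtop
      (by filter_upwards [hg', hdiv.eventually (lt_mem_nhds hcl)] with x hgx hx
          rw [lt_div_iff₀ hgx] at hx; linarith)
    filter_upwards [hneg] with x hx
    rw [Pi.neg_apply, neg_div] at hx
    linarith
  · obtain ⟨c, hlc, hcu⟩ := exists_between hu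
    refine eventually_div_lt_of_deriv_le_mul hcu hf hg hgtop ?_
    filter_upwards [hg', hdiv.eventually (gt_mem_nhds hlc)] with x hgx hx
    rw [div_lt_iff₀ hgx] at hx; linarith

noncomputable def lowerIncGamma (a x : ℝ) : ℝ := ∫ z in Ioo 0 x, z ^ (a - 1) * Real.exp (-z)

section
variable {a : ℝ}

theorem integrableOn_rpow_mul_exp_neg (ha : 0 < a) :
    IntegrableOn (fun z : ℝ => z ^ (a - 1) * Real.exp (-z)) (Ioi 0) := by
  simpa only [mul_comm] using Real.GammaIntegral_convergent ha

theorem lowerIncGamma_nonneg (a x : ℝ) : 0 ≤ lowerIncGamma a x :=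
  setIntegral_nonneg measurableSet_Ioo fun z hz => by have := hz.1; positivity

theorem lowerIncGamma_le_rpow_div (ha : 0 < a) {x : ℝ} (hx : 0 ≤ x) :
    lowerIncGamma a x ≤ x ^ a / a := by
  calc lowerIncGamma a x ≤ ∫ z in Ioc 0 x, z ^ (a - 1) := by
        rw [lowerIncGamma, ← integral_Ioc_eq_integral_Ioo]
        refine setIntegral_mono_on ((integrableOn_rpow_mul_exp_neg ha).mono_set Ioc_subset_Ioi_self)
          (intervalIntegral.intervalIntegrable_rpow' (by linarith)).1 measurableSet_Ioc fun z hz => ?_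
        have hz0 : 0 < z := hz.1
        exact mul_le_of_le_one_right (by positivity) (Real.exp_le_one_iff.2 (by linarith))
    _ = x ^ a / a := by
        rw [← intervalIntegral.integral_of_le hx, integral_rpow (Or.inl (by linarith)),
          sub_add_cancel, Real.zero_rpow ha.ne', sub_zero]

theorem tendsto_lowerIncGamma_atTop (ha : 0 < a) :
    Tendsto (lowerIncGamma a) atTop (𝓝 (Real.Gamma a)) := by
  have h := intervalIntegral_tendsto_integral_Ioi 0 (integrableOn_rpow_mul_exp_neg ha) tendsto_id
  rw [Real.Gamma_eq_integral ha]
  simp only [mul_comm (Real.exp _)]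
  refine h.congr' ?_
  filter_upwards [eventually_ge_atTop 0] with x hx
  rw [id, intervalIntegral.integral_of_le hx, integral_Ioc_eq_integral_Ioo, lowerIncGamma]

theorem continuousOn_lowerIncGamma (ha : 0 < a) : ContinuousOn (lowerIncGamma a) (Ioi 0) := by
  intro x hx
  have hprim := intervalIntegral.continuousOn_primitive (μ := volume) (a := 0) (b := x + 1)
    (integrableOn_Icc_iff_integrableOn_Ioc (by simp) |>.mpr
      ((integrableOn_rpow_mul_exp_neg ha).mono_set Ioc_subset_Ioi_self))
  have heq : (fun y => ∫ t in Ioc 0 y, t ^ (a - 1) * Real.exp (-t)) = lowerIncGamma a := by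
    funext y; exact integral_Ioc_eq_integral_Ioo
  rw [← heq]
  exact (hprim.continuousAt (Icc_mem_nhds (mem_Ioi.1 hx) (by linarith))).continuousWithinAt

noncomputable def arlIntegrand (a x : ℝ) : ℝ := x ^ (-a) * Real.exp x * lowerIncGamma a x

theorem continuousOn_arlIntegrand (ha : 0 < a) : ContinuousOn (arlIntegrand a) (Ioi 0) :=
  ((continuousOn_id.rpow_const fun _ hx => Or.inl (ne_of_gt hx)).mul
    Real.continuous_exp.continuousOn).mul (continuousOn_lowerIncGamma ha)

theorem arlIntegrand_nonneg (a : ℝ) {x : ℝ} (hx : 0 < x) : 0 ≤ arlIntegrand a x := by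
  have := lowerIncGamma_nonneg a x
  unfold arlIntegrand; positivity

theorem arlIntegrand_le_exp_div (ha : 0 < a) {x : ℝ} (hx : 0 < x) :
    arlIntegrand a x ≤ Real.exp x / a := by
  calc arlIntegrand a x ≤ x ^ (-a) * Real.exp x * (x ^ a / a) :=
        mul_le_mul_of_nonneg_left (lowerIncGamma_le_rpow_div ha hx.le) (by positivity)
    _ = Real.exp x / a := by rw [Real.rpow_neg hx.le]; field_simp

theorem integrableOn_arlIntegrand_Ioc (ha : 0 < a) (B : ℝ) :
    IntegrableOn (arlIntegrand a) (Ioc 0 B) := by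
  refine Integrable.mono' (integrableOn_const (C := Real.exp B / a) measure_Ioc_lt_top.ne)
    (((continuousOn_arlIntegrand ha).aestronglyMeasurable measurableSet_Ioi).mono_set
      Ioc_subset_Ioi_self) ?_
  filter_upwards [ae_restrict_mem measurableSet_Ioc] with x hx
  rw [Real.norm_of_nonneg (arlIntegrand_nonneg a hx.1)]
  exact (arlIntegrand_le_exp_div ha hx.1).trans (by gcongr; exact hx.2)

theorem hasDerivAt_integral_arlIntegrand (ha : 0 < a) {B : ℝ} (hB : 0 < B) :
    HasDerivAt (fun b => ∫ x in 0..b, arlIntegrand a x) (arlIntegrand a B) B :=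
  intervalIntegral.integral_hasDerivAt_right
    ((intervalIntegrable_iff_integrableOn_Ioc_of_le hB.le).2 (integrableOn_arlIntegrand_Ioc ha B))
    ((continuousOn_arlIntegrand ha).stronglyMeasurableAtFilter isOpen_Ioi B hB)
    ((continuousOn_arlIntegrand ha).continuousAt (Ioi_mem_nhds hB))

theorem hasDerivAt_rpow_neg_mul_exp {x : ℝ} (hx : 0 < x) :
    HasDerivAt (fun y => y ^ (-a) * Real.exp y) (x ^ (-a) * Real.exp x * (1 - a / x)) x := by
  refine ((Real.hasDerivAt_rpow_const (p := -a) (Or.inl hx.ne')).mul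
    (Real.hasDerivAt_exp x)).congr_deriv ?_
  rw [Real.rpow_sub_one hx.ne']
  field_simp
  ring

end

/-- Asymptotic equivalence of the ARL₀ integral:
`∫₀ᴮ x^{-N/2}e^x γ(N/2,x) dx ~ Γ(N/2) B^{-N/2} e^B` as `B → ∞`. -/
theorem arl_integral_asymptotics (N : ℝ) (hN : 0 < N) :
    Tendsto (fun B : ℝ =>
        (∫ x in Set.Ioo (0:ℝ) B, x ^ (-(N/2)) * Real.exp x *
          ∫ z in Set.Ioo (0:ℝ) x, z ^ (N/2 - 1) * Real.exp (-z))
        / (Real.Gamma (N/2) * B ^ (-(N/2)) * Real.exp B))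
      atTop (nhds 1) := by
  set a := N / 2
  have ha : 0 < a := half_pos hN
  have hΓ : 0 < Real.Gamma a := Real.Gamma_pos_of_pos ha
  have hdenom_top : Tendsto (fun B => Real.Gamma a * (B ^ (-a) * Real.exp B)) atTop atTop := by
    refine ((tendsto_exp_div_rpow_atTop a).const_mul_atTop hΓ).congr' ?_
    filter_upwards [eventually_gt_atTop 0] with B hB
    rw [Real.rpow_neg hB.le, div_eq_inv_mul]
  have hderiv_ratio : Tendsto (fun B => arlIntegrand a B /
      (Real.Gamma a * (B ^ (-a) * Real.exp B * (1 - a / B)))) atTop (𝓝 1) := by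
    have h := (tendsto_lowerIncGamma_atTop ha).div ((tendsto_const_nhds (x := Real.Gamma a)).mul
      ((tendsto_const_nhds (x := (1 : ℝ))).sub
        ((tendsto_const_nhds (x := a)).div_atTop tendsto_id))) (by simp [hΓ.ne'])
    rw [sub_zero, mul_one, div_self hΓ.ne'] at h
    refine h.congr' ?_
    filter_upwards [eventually_gt_atTop 0] with B hB
    simp only [arlIntegrand, Pi.div_apply, id]
    field_simp
  refine (lhopital_top_atTop
    ((eventually_gt_atTop 0).mono fun B hB => hasDerivAt_integral_arlIntegrand ha hB)
    ((eventually_gt_atTop 0).mono fun B hB => (hasDerivAt_rpow_neg_mul_exp hB).const_mul _)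
    ?_ hdenom_top hderiv_ratio).congr' ?_
  · filter_upwards [eventually_gt_atTop a] with B hB
    have hB0 : 0 < B := ha.trans hB
    have : 0 < 1 - a / B := sub_pos.2 ((div_lt_one hB0).2 hB)
    positivity
  · filter_upwards [eventually_ge_atTop 0] with B hB
    rw [intervalIntegral.integral_of_le hB, integral_Ioc_eq_integral_Ioo, mul_assoc]
    rfl
end
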